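/- arXiv:1706.05644 — 5 statements merged into one kernel-verified Lean document; each statement's English description precedes it below -/
import Mathlib

section
/- Suppose q is a real-valued function on {α−1+s : s = 0,1,…,b+1} and f : ℝ → ℝ. If y : T_b → ℝ satisfies the discrete fractional boundary value problem Δ^{α}y(t) + q(t+α−1)·f(y(t+α−1)) = 0 for t = 0,1,…,b+1 together with y(α−2) = 0 and y(α+b+1) = 0, then y(t) = Σ_{s=0}^{b+1} G(t,s)·q(s+α−1)·f(y(s+α−1)) for every t ∈ T_b. -/
/-- Falling power `x^[y] = Γ(x+1)/Γ(x-y+1)`; it equals 0 when `x-y+1` is a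
nonpositive integer since `Real.Gamma` vanishes there (and division by zero is zero). -/
noncomputable def fp (x y : ℝ) : ℝ := Real.Gamma (x + 1) / Real.Gamma (x - y + 1)

/-- The Green function `G(t,s)` of the discrete fractional boundary value problem,
for `t ∈ T_b` (a real number) and an integer `s ∈ {0,1,…,b+1}`. -/
noncomputable def G (α : ℝ) (b : ℕ) (t : ℝ) (s : ℕ) : ℝ :=
  if (s : ℝ) ≤ t - α + 1 then
    1 / Real.Gamma α *
      (fp t (α - 1) * fp (α + b - s) (α - 1) / fp (α + b + 1) (α - 1) - fp (t - s - 1) (α - 1))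
  else
    1 / Real.Gamma α * (fp t (α - 1) * fp (α + b - s) (α - 1) / fp (α + b + 1) (α - 1))

/-- A function `y : T_b → ℝ`, `T_b = {α-2+k : k = 0,…,b+3}`, is encoded as `y : ℕ → ℝ`
via `k ↦ y(α-2+k)`.  `fracSum α y k` is the discrete fractional sum
`(Δ^{-(2-α)} y)(t)` of order `2-α ∈ [0,1)` starting at `a = α-2`, evaluated at the
point `t = a + (2-α) + k = k`; when `α = 2` we use the convention `Δ^0 y = y`. -/
noncomputable def fracSum (α : ℝ) (y : ℕ → ℝ) (k : ℕ) : ℝ :=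
  if α = 2 then y k
  else 1 / Real.Gamma (2 - α) *
    ∑ j ∈ Finset.range (k + 1), fp ((k : ℝ) - (j : ℝ) + 1 - α) (1 - α) * y j

/-- The discrete fractional difference `(Δ^α y)(t) = Δ²(Δ^{-(2-α)} y)(t)` at `t ∈ ℕ`,
where `Δ` is the forward difference. -/
noncomputable def fracDiff (α : ℝ) (y : ℕ → ℝ) (t : ℕ) : ℝ :=
  fracSum α y (t + 2) - 2 * fracSum α y (t + 1) + fracSum α y t

/-!
The fractional sum of order `2 - α` is convolution with the coefficients
`multichoose (2 - α) m` of `(1 - x)^(α - 2)`. By the Chu–Vandermonde identity it maps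
`t^[α-1]` to `Γ(α) t`, so `Δ^α t^[α-1] = 0`, while the shifted `(t - s - 1)^[α-1]` is mapped
to `Γ(α) (t - s - 1)₊`, whose second difference is `Γ(α) δ_{ts}`. Hence
`z(t) = Σ_s G(t,s) h(s)` solves `Δ^α z = -h` with zero boundary values.

The homogeneous problem has only the solutions `c t^[α-1]`: zero second differences make the
fractional sum linear in `t`, and the convolution kernel has leading coefficient `1`, so it is
invertible. Since `t^[α-1]` does not vanish at `α + b + 1`, the solution `y - z` is `0`.
-/

open Finset Real
open scoped Nat

theorem Ring.multichoose_add {R : Type*} [CommRing R] [BinomialRing R] (r s : R) (n : ℕ) :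
    Ring.multichoose (r + s) n =
      ∑ ij ∈ antidiagonal n, Ring.multichoose r ij.1 * Ring.multichoose s ij.2 := by
  have h := Ring.add_choose_eq n (Commute.all (-r) (-s))
  rw [← neg_add, Ring.choose_neg'] at h
  have hterm : ∀ ij ∈ antidiagonal n, Ring.choose (-r) ij.1 * Ring.choose (-s) ij.2 =
      (n : ℤ).negOnePow • (Ring.multichoose r ij.1 * Ring.multichoose s ij.2) := by
    intro ij hij
    rw [Ring.choose_neg', Ring.choose_neg', smul_mul_smul_comm, ← Int.negOnePow_add,
      ← Nat.cast_add, mem_antidiagonal.mp hij]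
  rwa [sum_congr rfl hterm, ← smul_sum, smul_left_cancel_iff] at h

theorem Real.factorial_mul_multichoose (a : ℝ) (n : ℕ) :
    n ! * Ring.multichoose a n = (ascPochhammer ℝ n).eval a := by
  rw [← nsmul_eq_mul, Ring.factorial_nsmul_multichoose_eq_ascPochhammer,
    Polynomial.ascPochhammer_smeval_eq_eval]

theorem Real.multichoose_pos {a : ℝ} (ha : 0 < a) (n : ℕ) : 0 < Ring.multichoose a n := by
  have h := ascPochhammer_pos n a ha
  rw [← factorial_mul_multichoose] at h
  exact pos_of_mul_pos_right h (by positivity)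

theorem Real.Gamma_add_nat {a : ℝ} (ha : ∀ k : ℕ, a + k ≠ 0) (n : ℕ) :
    Gamma (a + n) = n ! * Ring.multichoose a n * Gamma a := by
  rw [factorial_mul_multichoose]
  induction n with
  | zero => simp
  | succ n ih =>
    rw [Nat.cast_succ, ← add_assoc, Gamma_add_one (ha n), ih, ascPochhammer_succ_eval]
    ring

theorem fp_nat_add_sub_one {c : ℝ} (hc : 0 < c) (m : ℕ) :
    fp (m + c - 1) (c - 1) = Gamma c * Ring.multichoose c m := by
  have hm : (m ! : ℝ) ≠ 0 := by positivity
  rw [fp, show (m : ℝ) + c - 1 + 1 = c + m by ring,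
    show (m : ℝ) + c - 1 - (c - 1) + 1 = m + 1 by ring, Gamma_nat_eq_factorial,
    Gamma_add_nat (fun k => by positivity)]
  field_simp

theorem eq_add_mul_of_secondDiff_eq_zero {R : Type*} [CommRing R] {S : ℕ → R} {n : ℕ}
    (h : ∀ t ≤ n, S (t + 2) - 2 * S (t + 1) + S t = 0) :
    ∀ k ≤ n + 2, S k = S 0 + k * (S 1 - S 0) := by
  intro k hk
  induction k using Nat.twoStepInduction with
  | zero => simp
  | one => simp
  | more k ih0 ih1 =>
    have h0 := ih0 (by omega)
    have h1 := ih1 (by omega)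
    push_cast at h1 ⊢
    linear_combination h k (by omega) + 2 * h1 - h0

theorem secondDiff_tsub_eq_ite (s t : ℕ) :
    ((t + 2 - (s + 1) : ℕ) : ℝ) - 2 * ((t + 1 - (s + 1) : ℕ) : ℝ) +
      ((t - (s + 1) : ℕ) : ℝ) = if t = s then 1 else 0 := by
  rcases lt_trichotomy t s with h | rfl | h
  · rw [Nat.sub_eq_zero_of_le (by omega), Nat.sub_eq_zero_of_le (by omega),
      Nat.sub_eq_zero_of_le (by omega), if_neg h.ne]
    simp
  · rw [show t + 2 - (t + 1) = 1 by omega, Nat.sub_self, Nat.sub_eq_zero_of_le (by omega),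
      if_pos rfl]
    simp
  · obtain ⟨d, rfl⟩ := Nat.exists_eq_add_of_lt h
    rw [show s + d + 1 + 2 - (s + 1) = d + 2 by omega,
      show s + d + 1 + 1 - (s + 1) = d + 1 by omega, show s + d + 1 - (s + 1) = d by omega,
      if_neg (by omega)]
    push_cast
    ring

/-- `t ↦ t^[α-1]` on `T_b`, with the same encoding `k ↦ α - 2 + k` as in `fracSum`. -/
noncomputable def homogeneousSol (α : ℝ) (k : ℕ) : ℝ := fp (α - 2 + k) (α - 1)

section

variable {α : ℝ}

theorem fracSum_eq_sum (hα : α ≤ 2) (y : ℕ → ℝ) (k : ℕ) :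
    fracSum α y k = ∑ j ∈ range (k + 1), Ring.multichoose (2 - α) (k - j) * y j := by
  rcases hα.eq_or_lt with rfl | hα
  · -- `multichoose 0` is the unit impulse, matching the convention `Δ^0 y = y`
    rw [fracSum, if_pos rfl, sum_range_succ, sum_eq_zero fun j hj => ?_]
    · simp
    · obtain ⟨i, hi⟩ : ∃ i, k - j = i + 1 := Nat.exists_eq_add_one.mpr (by simp at hj; omega)
      rw [sub_self, hi, Ring.multichoose_zero_succ, zero_mul]
  · have hΓ : Gamma (2 - α) ≠ 0 := (Gamma_pos_of_pos (by linarith)).ne'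
    rw [fracSum, if_neg hα.ne, mul_sum]
    refine sum_congr rfl fun j hj => ?_
    rw [show (k : ℝ) - j + 1 - α = ((k - j : ℕ) : ℝ) + (2 - α) - 1 by
        rw [Nat.cast_sub (by simp at hj; omega)]; ring,
      show 1 - α = 2 - α - 1 by ring, fp_nat_add_sub_one (by linarith)]
    field_simp

theorem fracSum_eq_add_sum (hα : α ≤ 2) (y : ℕ → ℝ) (k : ℕ) :
    fracSum α y k = y k + ∑ j ∈ range k, Ring.multichoose (2 - α) (k - j) * y j := by
  rw [fracSum_eq_sum hα, sum_range_succ, Nat.sub_self, Ring.multichoose_zero_right, one_mul,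
    add_comm]

theorem fracSum_sub (y z : ℕ → ℝ) (k : ℕ) :
    fracSum α (fun j => y j - z j) k = fracSum α y k - fracSum α z k := by
  unfold fracSum
  split_ifs
  · rfl
  · simp only [mul_sub, sum_sub_distrib]

theorem fracSum_const_mul (c : ℝ) (y : ℕ → ℝ) (k : ℕ) :
    fracSum α (fun j => c * y j) k = c * fracSum α y k := by
  unfold fracSum
  split_ifs
  · rfl
  · simp only [mul_sum]
    exact sum_congr rfl fun _ _ => by ring

theorem fracSum_sum {ι : Type*} (s : Finset ι) (y : ι → ℕ → ℝ) (k : ℕ) :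
    fracSum α (fun j => ∑ i ∈ s, y i j) k = ∑ i ∈ s, fracSum α (y i) k := by
  unfold fracSum
  split_ifs
  · rfl
  · simp only [mul_sum]
    exact sum_comm

theorem fracDiff_sub (y z : ℕ → ℝ) (t : ℕ) :
    fracDiff α (fun j => y j - z j) t = fracDiff α y t - fracDiff α z t := by
  simp only [fracDiff, fracSum_sub]
  ring

theorem fracDiff_const_mul (c : ℝ) (y : ℕ → ℝ) (t : ℕ) :
    fracDiff α (fun j => c * y j) t = c * fracDiff α y t := by
  simp only [fracDiff, fracSum_const_mul]
  ring

theorem fracDiff_sum {ι : Type*} (s : Finset ι) (y : ι → ℕ → ℝ) (t : ℕ) :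
    fracDiff α (fun j => ∑ i ∈ s, y i j) t = ∑ i ∈ s, fracDiff α (y i) t := by
  simp only [fracDiff, fracSum_sum, mul_sum, ← sum_sub_distrib, ← sum_add_distrib]

theorem homogeneousSol_zero (α : ℝ) : homogeneousSol α 0 = 0 := by
  rw [homogeneousSol, fp, show α - 2 + ((0 : ℕ) : ℝ) - (α - 1) + 1 = 0 by simp; ring,
    Gamma_zero, div_zero]

theorem homogeneousSol_succ (hα : 0 < α) (i : ℕ) :
    homogeneousSol α (i + 1) = Gamma α * Ring.multichoose α i := by
  rw [homogeneousSol, ← fp_nat_add_sub_one hα]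
  push_cast
  ring_nf

theorem homogeneousSol_ne_zero (hα : 0 < α) {k : ℕ} (hk : k ≠ 0) :
    homogeneousSol α k ≠ 0 := by
  obtain ⟨i, rfl⟩ := Nat.exists_eq_succ_of_ne_zero hk
  rw [homogeneousSol_succ hα]
  exact (mul_pos (Gamma_pos_of_pos hα) (Real.multichoose_pos hα i)).ne'

theorem fracSum_homogeneousSol (hα0 : 0 < α) (hα2 : α ≤ 2) (m : ℕ) :
    fracSum α (homogeneousSol α) m = Gamma α * m := by
  rw [fracSum_eq_sum hα2]
  cases m with
  | zero => simp [homogeneousSol_zero]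
  | succ n =>
    -- the kernels of orders `α` and `2 - α` convolve to that of order `2`, namely `n ↦ n + 1`
    have hconv := Ring.multichoose_add α (2 - α) n
    rw [add_sub_cancel, Ring.multichoose_two, Nat.sum_antidiagonal_eq_sum_range_succ
      (fun i j => Ring.multichoose α i * Ring.multichoose (2 - α) j)] at hconv
    rw [sum_range_succ', homogeneousSol_zero, mul_zero, add_zero, Nat.cast_succ, hconv, mul_sum]
    refine sum_congr rfl fun i _ => ?_
    rw [homogeneousSol_succ hα0, Nat.add_sub_add_right]
    ring

theorem fracDiff_homogeneousSol (hα0 : 0 < α) (hα2 : α ≤ 2) (t : ℕ) :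
    fracDiff α (homogeneousSol α) t = 0 := by
  simp only [fracDiff, fracSum_homogeneousSol hα0 hα2]
  push_cast
  ring

theorem fracSum_comp_tsub (hα : α ≤ 2) {u : ℕ → ℝ} (hu : u 0 = 0) (n k : ℕ) :
    fracSum α (fun j => u (j - n)) k = fracSum α u (k - n) := by
  rw [fracSum_eq_sum hα, fracSum_eq_sum hα]
  rcases le_or_gt n k with hnk | hkn
  · obtain ⟨m, rfl⟩ := Nat.exists_eq_add_of_le hnk
    rw [Nat.add_sub_cancel_left, add_assoc, sum_range_add, sum_eq_zero fun j hj => ?_, zero_add]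
    · refine sum_congr rfl fun i _ => ?_
      rw [Nat.add_sub_add_left, Nat.add_sub_cancel_left]
    · rw [show j - n = 0 by simp at hj; omega, hu, mul_zero]
  · rw [Nat.sub_eq_zero_of_le hkn.le, sum_range_one, hu, mul_zero]
    exact sum_eq_zero fun j hj => by
      rw [show j - n = 0 by simp at hj; omega, hu, mul_zero]

theorem fracDiff_homogeneousSol_comp_tsub (hα0 : 0 < α) (hα2 : α ≤ 2) (s t : ℕ) :
    fracDiff α (fun k => homogeneousSol α (k - (s + 1))) t = if t = s then Gamma α else 0 := by
  simp only [fracDiff, fracSum_comp_tsub hα2 (homogeneousSol_zero α),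
    fracSum_homogeneousSol hα0 hα2]
  have h := secondDiff_tsub_eq_ite s t
  split_ifs at h ⊢ <;> linear_combination Gamma α * h

theorem eqOn_of_fracSum_eq (hα : α ≤ 2) {u u' : ℕ → ℝ} {n : ℕ}
    (h : ∀ k ≤ n, fracSum α u k = fracSum α u' k) : ∀ k ≤ n, u k = u' k := by
  intro k hk
  induction k using Nat.strong_induction_on with
  | _ k ih =>
    have hlow : ∑ j ∈ range k, Ring.multichoose (2 - α) (k - j) * u j =
        ∑ j ∈ range k, Ring.multichoose (2 - α) (k - j) * u' j :=
      sum_congr rfl fun j hj => by rw [ih j (mem_range.mp hj) (by simp at hj; omega)]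
    have hk := h k hk
    rwa [fracSum_eq_add_sum hα, fracSum_eq_add_sum hα, hlow, add_left_inj] at hk

theorem eqOn_zero_of_fracDiff_eq_zero (hα0 : 0 < α) (hα2 : α ≤ 2) {w : ℕ → ℝ} {n : ℕ}
    (hd : ∀ t ≤ n, fracDiff α w t = 0) (h0 : w 0 = 0) (hn : w (n + 2) = 0) :
    ∀ k ≤ n + 2, w k = 0 := by
  have hΓ : Gamma α ≠ 0 := (Gamma_pos_of_pos hα0).ne'
  set c := w 1 / Gamma α with hc_def
  have hS0 : fracSum α w 0 = 0 := by rw [fracSum_eq_add_sum hα2, h0, sum_range_zero, add_zero]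
  have hS1 : fracSum α w 1 = w 1 := by
    rw [fracSum_eq_add_sum hα2, sum_range_one, h0, mul_zero, add_zero]
  have hsum : ∀ k ≤ n + 2,
      fracSum α w k = fracSum α (fun j => c * homogeneousSol α j) k := by
    intro k hk
    rw [eq_add_mul_of_secondDiff_eq_zero hd k hk, fracSum_const_mul,
      fracSum_homogeneousSol hα0 hα2, hS0, hS1, hc_def]
    field_simp
    ring
  have hw := eqOn_of_fracSum_eq hα2 hsum
  have hc : c = 0 := by
    have hwn := hw (n + 2) le_rfl
    rw [hn, eq_comm, mul_eq_zero] at hwn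
    exact hwn.resolve_right (homogeneousSol_ne_zero hα0 (by omega))
  intro k hk
  rw [hw k hk, hc, zero_mul]

/-- `G(t, s)` on `T_b`, where the case split on `s ≤ t - α + 1` is absorbed by
`homogeneousSol α 0 = 0` and truncated subtraction. -/
theorem G_eq (α : ℝ) (b k s : ℕ) :
    G α b (α - 2 + k) s = (Gamma α)⁻¹ * (fp (α + b - s) (α - 1) / fp (α + b + 1) (α - 1) *
      homogeneousSol α k - homogeneousSol α (k - (s + 1))) := by
  have hcond : (s : ℝ) ≤ α - 2 + k - α + 1 ↔ s + 1 ≤ k := by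
    rw [show α - 2 + (k : ℝ) - α + 1 = k - 1 by ring, le_sub_iff_add_le]
    exact_mod_cast Iff.rfl
  rw [G, homogeneousSol]
  split_ifs with h
  · rw [homogeneousSol, Nat.cast_sub (hcond.mp h)]
    push_cast
    ring_nf
  · rw [Nat.sub_eq_zero_of_le (by rw [hcond] at h; omega), homogeneousSol_zero]
    ring

theorem G_left_end (α : ℝ) (b s : ℕ) : G α b (α - 2 + (0 : ℕ)) s = 0 := by
  rw [G_eq, Nat.zero_sub, homogeneousSol_zero]
  ring

theorem G_right_end (hα : 0 < α) {b s : ℕ} (hs : s ≤ b + 1) :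
    G α b (α - 2 + (b + 3 : ℕ)) s = 0 := by
  have h1 : fp (α + b + 1) (α - 1) = homogeneousSol α (b + 3) := by
    rw [homogeneousSol]
    push_cast
    ring_nf
  have h2 : fp (α + b - s) (α - 1) = homogeneousSol α (b + 3 - (s + 1)) := by
    rw [homogeneousSol, Nat.cast_sub (by omega)]
    push_cast
    ring_nf
  rw [G_eq, h1, h2, div_mul_cancel₀ _ (homogeneousSol_ne_zero hα (by omega)), sub_self,
    mul_zero]

theorem fracDiff_G (hα0 : 0 < α) (hα2 : α ≤ 2) (b s t : ℕ) :
    fracDiff α (fun k => G α b (α - 2 + k) s) t = if t = s then -1 else 0 := by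
  have hΓ : Gamma α ≠ 0 := (Gamma_pos_of_pos hα0).ne'
  simp only [G_eq]
  rw [fracDiff_const_mul, fracDiff_sub, fracDiff_const_mul, fracDiff_homogeneousSol hα0 hα2,
    fracDiff_homogeneousSol_comp_tsub hα0 hα2]
  split_ifs <;> simp [hΓ]

theorem fracDiff_sum_G_mul (hα0 : 0 < α) (hα2 : α ≤ 2) (b : ℕ) (h : ℕ → ℝ) {t : ℕ}
    (ht : t ≤ b + 1) :
    fracDiff α (fun k => ∑ s ∈ range (b + 2), G α b (α - 2 + k) s * h s) t = -h t := by
  simp only [mul_comm _ (h _)]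
  rw [fracDiff_sum]
  simp only [fracDiff_const_mul, fracDiff_G hα0 hα2, mul_ite, mul_neg_one, mul_zero]
  rw [sum_ite_eq, if_pos (mem_range.mpr (by omega))]

end

/-- Here `y k` stands for `y(α-2+k)` and `q s` for `q(α-1+s)`. -/
theorem statement0_general (α : ℝ) (b : ℕ) (hα1 : 1 < α) (hα2 : α ≤ 2)
    (q : ℕ → ℝ) (f : ℝ → ℝ) (y : ℕ → ℝ)
    (hbvp : ∀ t : ℕ, t ≤ b + 1 → fracDiff α y t + q t * f (y (t + 1)) = 0)
    (hbc0 : y 0 = 0) (hbc1 : y (b + 3) = 0) :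
    ∀ k : ℕ, k ≤ b + 3 →
      y k = ∑ s ∈ Finset.range (b + 2), G α b (α - 2 + k) s * q s * f (y (s + 1)) := by
  have hα0 : 0 < α := by linarith
  set h : ℕ → ℝ := fun s => q s * f (y (s + 1))
  set z : ℕ → ℝ := fun k => ∑ s ∈ range (b + 2), G α b (α - 2 + k) s * h s
  have hdiff : ∀ t ≤ b + 1, fracDiff α (fun k => y k - z k) t = 0 := fun t ht => by
    linarith [fracDiff_sub (α := α) y z t, fracDiff_sum_G_mul hα0 hα2 b h ht, hbvp t ht]
  have hleft : y 0 - z 0 = 0 := by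
    simp only [z, hbc0, G_left_end, zero_mul, sum_const_zero, sub_zero]
  have hright : y (b + 3) - z (b + 3) = 0 := by
    rw [hbc1, zero_sub, neg_eq_zero]
    exact sum_eq_zero fun s hs => by rw [G_right_end hα0 (by simp at hs; omega), zero_mul]
  intro k hk
  simpa [z, h, sub_eq_zero, mul_assoc] using
    eqOn_zero_of_fracDiff_eq_zero hα0 hα2 hdiff hleft hright k hk

/-- If `y` solves the discrete fractional BVP
`Δ^α y(t) + q(t+α-1)·f(y(t+α-1)) = 0`, `t = 0,…,b+1`, with
`y(α-2) = y(α+b+1) = 0`, then `y` satisfies the Green-function sum representation.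
Here `y k` stands for `y(α-2+k)` and `q s` stands for `q(α-1+s)`. -/
theorem statement0 (α : ℝ) (b : ℕ) (hα1 : 1 < α) (hα2 : α ≤ 2) (hb : 2 ≤ b)
    (q : ℕ → ℝ) (f : ℝ → ℝ) (y : ℕ → ℝ)
    (hbvp : ∀ t : ℕ, t ≤ b + 1 → fracDiff α y t + q t * f (y (t + 1)) = 0)
    (hbc0 : y 0 = 0) (hbc1 : y (b + 3) = 0) :
    ∀ k : ℕ, k ≤ b + 3 →
      y k = ∑ s ∈ Finset.range (b + 2), G α b (α - 2 + k) s * q s * f (y (s + 1)) :=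
  statement0_general α b hα1 hα2 q f y hbvp hbc0 hbc1
end

section
/- For every t ∈ {α−1+k : k = 0,1,…,b+1} and every integer s ∈ {1,…,b+1}, the Green function satisfies G(t,s) > 0. -/
/-!
Write `β = α - 1` and `h(x) = Γ(β + x) / Γ(x)`, so that `t^[β] = h(t - β + 1)`. For
`t = β + k` the Green function is a positive multiple of `h(k+1) h(b+2-s) / h(b+3)`, minus
`h(k-s)` when `s ≤ k`. Since `h(x+1) / h(x) = 1 + β/x` decreases strictly in `x`, the ratio
`h(x + m + 1) / h(x)` decreases strictly as well, and comparing it at `x = k - s < y = b + 2 - s`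
with `m = s` gives `h(k-s) h(b+3) < h(k+1) h(b+2-s)`, i.e. the positivity of `G`.
-/

open Real

noncomputable def gammaRatio (β x : ℝ) : ℝ := Gamma (β + x) / Gamma x

lemma fp_eq_gammaRatio (x y : ℝ) : fp x y = gammaRatio y (x - y + 1) := by
  unfold fp gammaRatio
  ring_nf

lemma gammaRatio_zero (β : ℝ) : gammaRatio β 0 = 0 := by
  simp [gammaRatio, Gamma_zero]

lemma gammaRatio_pos {β x : ℝ} (hβ : 0 ≤ β) (hx : 0 < x) : 0 < gammaRatio β x :=
  div_pos (Gamma_pos_of_pos (by linarith)) (Gamma_pos_of_pos hx)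

lemma gammaRatio_add_one {β x : ℝ} (hβ : 0 ≤ β) (hx : 0 < x) :
    gammaRatio β (x + 1) = gammaRatio β x * (1 + β / x) := by
  unfold gammaRatio
  rw [← add_assoc, Gamma_add_one (by linarith), Gamma_add_one hx.ne']
  field_simp
  ring

lemma gammaRatio_mul_lt_mul {β x y : ℝ} (hβ : 0 < β) (hx : 0 < x) (hxy : x < y) (m : ℕ) :
    gammaRatio β x * gammaRatio β (y + (m + 1)) < gammaRatio β (x + (m + 1)) * gammaRatio β y := by
  have hy : 0 < y := hx.trans hxy
  induction m with
  | zero =>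
    have hstep : 1 + β / y < 1 + β / x := by gcongr
    have hpos : 0 < gammaRatio β x * gammaRatio β y :=
      mul_pos (gammaRatio_pos hβ.le hx) (gammaRatio_pos hβ.le hy)
    simp only [Nat.cast_zero, zero_add]
    rw [gammaRatio_add_one hβ.le hx, gammaRatio_add_one hβ.le hy]
    nlinarith
  | succ m ih =>
    have hx' : 0 < x + (m + 1) := by positivity
    have hy' : 0 < y + (m + 1) := by positivity
    have hstep : 1 + β / (y + (m + 1)) < 1 + β / (x + (m + 1)) := by gcongr
    have hprod := mul_lt_mul'' ih hstep
      (mul_pos (gammaRatio_pos hβ.le hx) (gammaRatio_pos hβ.le hy')).le (by positivity)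
    push_cast
    rw [← add_assoc x, ← add_assoc y, gammaRatio_add_one hβ.le hx', gammaRatio_add_one hβ.le hy']
    linarith

lemma gammaRatio_mul_lt_mul_of_nonneg {β x y : ℝ} (hβ : 0 < β) (hx : 0 ≤ x) (hxy : x < y)
    (m : ℕ) :
    gammaRatio β x * gammaRatio β (y + (m + 1)) < gammaRatio β (x + (m + 1)) * gammaRatio β y := by
  rcases hx.eq_or_lt with rfl | hx
  · rw [gammaRatio_zero, zero_mul]
    exact mul_pos (gammaRatio_pos hβ.le (by positivity)) (gammaRatio_pos hβ.le hxy)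
  · exact gammaRatio_mul_lt_mul hβ hx hxy m

theorem statement2_general (α : ℝ) (b : ℕ) (hα1 : 1 < α) :
    ∀ k : ℕ, k ≤ b + 1 → ∀ s : ℕ, 1 ≤ s → s ≤ b + 1 → 0 < G α b (α - 1 + k) s := by
  intro k hk s _ hs
  have hβ : 0 < α - 1 := by linarith
  have hk' : (k : ℝ) ≤ b + 1 := by exact_mod_cast hk
  have hs' : (s : ℝ) ≤ b + 1 := by exact_mod_cast hs
  have ht : fp (α - 1 + k) (α - 1) = gammaRatio (α - 1) (k + 1) := by
    rw [fp_eq_gammaRatio]; congr 1; ring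
  have hbs : fp (α + b - s) (α - 1) = gammaRatio (α - 1) (b + 2 - s) := by
    rw [fp_eq_gammaRatio]; congr 1; ring
  have hb : fp (α + b + 1) (α - 1) = gammaRatio (α - 1) (b + 3) := by
    rw [fp_eq_gammaRatio]; congr 1; ring
  have hts : fp (α - 1 + k - s - 1) (α - 1) = gammaRatio (α - 1) (k - s) := by
    rw [fp_eq_gammaRatio]; congr 1; ring
  have hb_pos : 0 < gammaRatio (α - 1) (b + 3) := gammaRatio_pos hβ.le (by positivity)
  have hΓ : 0 < 1 / Gamma α := one_div_pos.2 (Gamma_pos_of_pos (by linarith))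
  unfold G
  rw [ht, hbs, hb, hts]
  split_ifs with hsk
  · refine mul_pos hΓ (sub_pos.2 ((lt_div_iff₀ hb_pos).2 ?_))
    have key := gammaRatio_mul_lt_mul_of_nonneg hβ (x := k - s) (y := b + 2 - s)
      (by linarith) (by linarith) s
    rwa [show (b : ℝ) + 2 - s + (s + 1) = b + 3 by ring,
      show (k : ℝ) - s + (s + 1) = k + 1 by ring] at key
  · exact mul_pos hΓ (div_pos (mul_pos (gammaRatio_pos hβ.le (by positivity))
      (gammaRatio_pos hβ.le (by linarith))) hb_pos)

/-- Positivity of the Green function: `G(t,s) > 0` for every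
`t = α-1+k`, `k = 0,…,b+1`, and every integer `s ∈ {1,…,b+1}`. -/
theorem statement2 (α : ℝ) (b : ℕ) (hα1 : 1 < α) (hα2 : α ≤ 2) (hb : 2 ≤ b) :
    ∀ k : ℕ, k ≤ b + 1 → ∀ s : ℕ, 1 ≤ s → s ≤ b + 1 → 0 < G α b (α - 1 + k) s :=
  statement2_general α b hα1
end

section
/- For every integer s ∈ {1,…,b+1}, the maximum of G(t,s) over t ∈ {α−1+k : k = 0,1,…,b+1} is attained at t = s+α−1; that is, max_{t ∈ {α−1,…,α+b}} G(t,s) = G(s+α−1, s). -/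
/-!
On the grid `t = α - 1 + k`, `Γ(α) G(t,s)` equals `c t^[α-1]` for `k ≤ s` and
`c t^[α-1] - (t-s-1)^[α-1]` for `k ≥ s`, where `c = (α+b-s)^[α-1] / (α+b+1)^[α-1]`.
The difference rule `Δ t^[ν] = ν t^[ν-1]` makes `t ↦ t^[ν]` nondecreasing along the grid for
`ν ≥ 0` and nonincreasing for `ν ≤ 0`. Hence `0 ≤ c ≤ 1`, the first expression is nondecreasing
in `k`, and the forward difference of the second, `(α-1) (c t^[α-2] - (t-s-1)^[α-2])`, is
nonpositive because `α - 2 ≤ 0`. So `k ↦ G(α-1+k, s)` peaks at `k = s`.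
-/

open Real

section FallingPower

variable {x y : ℝ}

lemma fp_nonneg (hx : 0 ≤ x + 1) (hxy : 0 ≤ x - y + 1) : 0 ≤ fp x y :=
  div_nonneg (Gamma_nonneg_of_nonneg hx) (Gamma_nonneg_of_nonneg hxy)

lemma fp_eq_zero_of_sub_add_one_eq_zero (hxy : x - y + 1 = 0) : fp x y = 0 := by
  simp [fp, hxy]

/-- At `x - y + 1 = 0` this still holds, through `Γ(0) = 0`. -/
lemma fp_add_one_sub (hx : 0 < x + 1) (hxy : 0 ≤ x - y + 1) :
    fp (x + 1) y - fp x y = y * fp x (y - 1) := by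
  have hΓ : Gamma (x + 1 + 1) = (x + 1) * Gamma (x + 1) := Gamma_add_one hx.ne'
  have e₁ : x + 1 - y + 1 = x - y + 1 + 1 := by ring
  have e₂ : x - (y - 1) + 1 = x - y + 1 + 1 := by ring
  rcases hxy.eq_or_lt with h | h
  · rw [fp_eq_zero_of_sub_add_one_eq_zero h.symm, fp, fp, hΓ, e₁, e₂, ← h]
    have hy : y = x + 1 := by linarith
    simp [hy]
  · have hΓ' := Gamma_add_one h.ne'
    have := Gamma_pos_of_pos h
    simp only [fp]
    rw [e₁, e₂, hΓ, hΓ']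
    field_simp
    ring

lemma monotone_fp_add_nat (hx : 0 < x + 1) (hxy : 0 ≤ x - y + 1) (hy : 0 ≤ y) :
    Monotone fun n : ℕ => fp (x + n) y := by
  refine monotone_nat_of_le_succ fun n => sub_nonneg.1 ?_
  have hn : (0 : ℝ) ≤ n := n.cast_nonneg
  rw [Nat.cast_succ, ← add_assoc, fp_add_one_sub (by linarith) (by linarith)]
  exact mul_nonneg hy (fp_nonneg (by linarith) (by linarith))

lemma antitone_fp_add_nat (hx : 0 < x + 1) (hy : y ≤ 0) :
    Antitone fun n : ℕ => fp (x + n) y := by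
  refine antitone_nat_of_succ_le fun n => sub_nonpos.1 ?_
  have hn : (0 : ℝ) ≤ n := n.cast_nonneg
  rw [Nat.cast_succ, ← add_assoc, fp_add_one_sub (by linarith) (by linarith)]
  exact mul_nonpos_of_nonpos_of_nonneg hy (fp_nonneg (by linarith) (by linarith))

end FallingPower

noncomputable def greenCoeff (α : ℝ) (b s : ℕ) : ℝ :=
  fp (α + b - s) (α - 1) / fp (α + b + 1) (α - 1)

section Green

variable {α : ℝ} {b s : ℕ}

lemma greenCoeff_nonneg (hα : 1 < α) (hs : s ≤ b + 1) : 0 ≤ greenCoeff α b s := by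
  have hs' : (s : ℝ) ≤ b + 1 := by exact_mod_cast hs
  have hb : (0 : ℝ) ≤ b := b.cast_nonneg
  exact div_nonneg (fp_nonneg (by linarith) (by linarith)) (fp_nonneg (by linarith) (by linarith))

lemma greenCoeff_le_one (hα : 1 < α) (hs : s ≤ b + 1) : greenCoeff α b s ≤ 1 := by
  have hs' : (s : ℝ) ≤ b + 1 := by exact_mod_cast hs
  have hb : (0 : ℝ) ≤ b := b.cast_nonneg
  have hmono := monotone_fp_add_nat (x := α + b - s) (y := α - 1) (by linarith) (by linarith)
    (by linarith) (Nat.zero_le (s + 1))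
  simp only [Nat.cast_zero, add_zero, Nat.cast_succ] at hmono
  rw [show α + b - s + (s + 1) = α + b + 1 by ring] at hmono
  exact div_le_one_of_le₀ hmono (fp_nonneg (by linarith) (by linarith))

lemma G_grid_of_le {k : ℕ} (hk : k ≤ s) :
    G α b (α - 1 + k) s = fp (α - 1 + k) (α - 1) * greenCoeff α b s / Gamma α := by
  rcases hk.lt_or_eq with hk | rfl
  · have hk' : ¬ (s : ℝ) ≤ α - 1 + k - α + 1 := by
      rw [show α - 1 + (k : ℝ) - α + 1 = k by ring]
      exact_mod_cast hk.not_ge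
    rw [G, if_neg hk', greenCoeff]
    ring
  · rw [G, if_pos (by linarith), show α - 1 + (k : ℝ) - k - 1 = α - 2 by ring,
      fp_eq_zero_of_sub_add_one_eq_zero (x := α - 2) (y := α - 1) (by ring), greenCoeff]
    ring

lemma G_grid_add (j : ℕ) :
    G α b (α - 1 + (s + j : ℕ)) s =
      (fp (α - 1 + (s + j : ℕ)) (α - 1) * greenCoeff α b s - fp (α - 2 + j) (α - 1)) /
        Gamma α := by
  have hj : (0 : ℝ) ≤ j := j.cast_nonneg
  rw [G, if_pos (by push_cast; linarith), greenCoeff,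
    show α - 1 + ((s + j : ℕ) : ℝ) - s - 1 = α - 2 + j by push_cast; ring]
  ring

lemma G_grid_le_of_le (hα : 1 < α) (hs : s ≤ b + 1) {k : ℕ} (hk : k ≤ s) :
    G α b (α - 1 + k) s ≤ G α b (α - 1 + s) s := by
  rw [G_grid_of_le hk, G_grid_of_le le_rfl]
  have hΓ : 0 < Gamma α := Gamma_pos_of_pos (by linarith)
  gcongr
  · exact greenCoeff_nonneg hα hs
  · exact monotone_fp_add_nat (by linarith) (by linarith) (by linarith) hk

lemma greenCoeff_mul_fp_le (hα1 : 1 < α) (hα2 : α ≤ 2) (hs : s ≤ b + 1) (j : ℕ) :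
    greenCoeff α b s * fp (α - 1 + (s + j : ℕ)) (α - 2) ≤ fp (α - 2 + j) (α - 2) := by
  have hj : (0 : ℝ) ≤ j := j.cast_nonneg
  have hanti := antitone_fp_add_nat (x := α - 2 + j) (y := α - 2) (by linarith) (by linarith)
    (Nat.zero_le (s + 1))
  simp only [Nat.cast_zero, add_zero] at hanti
  rw [show α - 2 + j + ((s + 1 : ℕ) : ℝ) = α - 1 + (s + j : ℕ) by push_cast; ring] at hanti
  calc greenCoeff α b s * fp (α - 1 + (s + j : ℕ)) (α - 2)
      ≤ 1 * fp (α - 1 + (s + j : ℕ)) (α - 2) := by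
        gcongr
        · exact fp_nonneg (by positivity) (by push_cast; linarith)
        · exact greenCoeff_le_one hα1 hs
    _ ≤ fp (α - 2 + j) (α - 2) := by rwa [one_mul]

lemma G_grid_add_succ_le (hα1 : 1 < α) (hα2 : α ≤ 2) (hs : s ≤ b + 1) (j : ℕ) :
    G α b (α - 1 + (s + (j + 1) : ℕ)) s ≤ G α b (α - 1 + (s + j : ℕ)) s := by
  have hj : (0 : ℝ) ≤ j := j.cast_nonneg
  rw [G_grid_add, G_grid_add, div_le_div_iff_of_pos_right (Gamma_pos_of_pos (by linarith))]
  have hΔt := fp_add_one_sub (x := α - 1 + (s + j : ℕ)) (y := α - 1)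
    (by positivity) (by push_cast; linarith)
  have hΔshift := fp_add_one_sub (x := α - 2 + j) (y := α - 1) (by linarith) (by linarith)
  rw [show α - 1 + ((s + j : ℕ) : ℝ) + 1 = α - 1 + (s + (j + 1) : ℕ) by push_cast; ring,
    show α - 1 - 1 = α - 2 by ring] at hΔt
  rw [show α - 2 + j + 1 = α - 2 + (j + 1 : ℕ) by push_cast; ring,
    show α - 1 - 1 = α - 2 by ring] at hΔshift
  have hstep := mul_le_mul_of_nonneg_left (greenCoeff_mul_fp_le hα1 hα2 hs j)
    (by linarith : (0 : ℝ) ≤ α - 1)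
  linear_combination greenCoeff α b s * hΔt - hΔshift + hstep

end Green

theorem statement3_general (α : ℝ) (b : ℕ) (hα1 : 1 < α) (hα2 : α ≤ 2) :
    ∀ s : ℕ, 1 ≤ s → s ≤ b + 1 →
      IsGreatest {x : ℝ | ∃ k : ℕ, k ≤ b + 1 ∧ x = G α b (α - 1 + k) s}
        (G α b ((s : ℝ) + α - 1) s) := by
  intro s _ hs
  rw [show (s : ℝ) + α - 1 = α - 1 + s by ring]
  refine ⟨⟨s, hs, rfl⟩, ?_⟩
  rintro _ ⟨k, -, rfl⟩
  rcases le_total k s with hks | hsk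
  · exact G_grid_le_of_le hα1 hs hks
  · obtain ⟨j, rfl⟩ := Nat.exists_eq_add_of_le hsk
    simpa using antitone_nat_of_succ_le (f := fun j => G α b (α - 1 + (s + j : ℕ)) s)
      (G_grid_add_succ_le hα1 hα2 hs) (Nat.zero_le j)

/-- For every integer `s ∈ {1,…,b+1}`, the maximum of `G(t,s)` over
`t ∈ {α-1+k : k = 0,…,b+1}` is attained at `t = s+α-1`, i.e. it equals
`G(s+α-1, s)`. -/
theorem statement3 (α : ℝ) (b : ℕ) (hα1 : 1 < α) (hα2 : α ≤ 2) (hb : 2 ≤ b) :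
    ∀ s : ℕ, 1 ≤ s → s ≤ b + 1 →
      IsGreatest {x : ℝ | ∃ k : ℕ, k ≤ b + 1 ∧ x = G α b (α - 1 + k) s}
        (G α b ((s : ℝ) + α - 1) s) :=
  statement3_general α b hα1 hα2
end

section
/- If b is odd, then the maximum of G(s+α−1,s) over integer s ∈ {1,…,b+1} equals (1/Γ(α))·Γ(b+3)·Γ((b+1)/2+α)² / ( Γ(b+α+2)·Γ((b+3)/2)² ). -/
/-!
On the diagonal `t = s + α - 1` the Green function is a positive constant times
`F(s) = Γ(s+α) Γ(α+b+1-s) / (Γ(s+1) Γ(b+2-s))` (`diagProfile`). Consecutive values satisfy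
`F(s+1) (α+b-s)(s+1) = F(s) (s+α)(b+1-s)`, and the two factors differ by `(α-1)(b-2s)`,
so for `α ≥ 1` the sequence `F` rises while `2s ≤ b` and falls afterwards. For `b = 2k+1`
the peak is at `s = k+1`, where the Gamma quotient is the stated one.
-/

open Real

lemma le_apply_peak_of_unimodal {β : Type*} [Preorder β] {f : ℕ → β} {m n : ℕ}
    (hup : ∀ s < m, f s ≤ f (s + 1)) (hdown : ∀ s, m ≤ s → s < n → f (s + 1) ≤ f s)
    {s : ℕ} (hs : s ≤ n) : f s ≤ f m := by
  rcases le_total s m with hsm | hms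
  · refine monotoneOn_of_le_succ Set.ordConnected_Iic (fun a _ _ ha => ?_)
      hsm le_rfl hsm
    rw [Order.succ_eq_add_one] at ha ⊢
    exact hup a (Set.mem_Iic.1 ha)
  · refine antitoneOn_of_succ_le Set.ordConnected_Icc (fun a _ ha ha' => ?_)
      (Set.left_mem_Icc.2 (hms.trans hs)) ⟨hms, hs⟩ hms
    rw [Order.succ_eq_add_one] at ha' ⊢
    exact hdown a ha.1 ha'.2

noncomputable def diagProfile (α : ℝ) (b s : ℕ) : ℝ :=
  Gamma (s + α) * Gamma (α + b + 1 - s) / (Gamma (s + 1) * Gamma (b + 2 - s))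

variable {α : ℝ} {b s : ℕ}

lemma G_diag_eq (hα : 0 < α) (hs : s ≤ b + 1) :
    G α b (s + α - 1) s = Gamma (b + 3) / (Gamma α * Gamma (b + α + 2)) * diagProfile α b s := by
  have hsb : (s : ℝ) ≤ b + 1 := by exact_mod_cast hs
  have : 0 < Gamma (b + 2 - s) := Gamma_pos_of_pos (by linarith)
  rw [G, if_pos (by linarith), fp, fp, fp, fp, diagProfile]
  -- the subtracted term is `(α-2)^[α-1] = Γ(α-1)/Γ(0) = 0`
  rw [show (s : ℝ) + α - 1 - s - 1 - (α - 1) + 1 = 0 by ring, Gamma_zero, div_zero, sub_zero]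
  ring_nf
  field_simp

lemma diagProfile_succ_mul (hα : 0 < α) (hs : s ≤ b) :
    diagProfile α b (s + 1) * ((α + b - s) * (s + 1)) =
      diagProfile α b s * ((s + α) * (b + 1 - s)) := by
  have hsb : (s : ℝ) ≤ b := by exact_mod_cast hs
  have h1 : (s : ℝ) + α ≠ 0 := by positivity
  have h2 : α + b - s ≠ 0 := by linarith
  have h3 : (s : ℝ) + 1 ≠ 0 := by positivity
  have h4 : (b : ℝ) + 1 - s ≠ 0 := by linarith
  have : 0 < Gamma (s + 1) := Gamma_pos_of_pos (by positivity)
  have : 0 < Gamma (b + 1 - s) := Gamma_pos_of_pos (by linarith)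
  simp only [diagProfile]
  push_cast
  rw [show (s : ℝ) + 1 + α = s + α + 1 by ring, Gamma_add_one h1,
    show α + b + 1 - (s + 1) = α + b - s by ring, show (b : ℝ) + 2 - (s + 1) = b + 1 - s by ring,
    Gamma_add_one h3, show α + b + 1 - s = α + b - s + 1 by ring, Gamma_add_one h2,
    show (b : ℝ) + 2 - s = b + 1 - s + 1 by ring, Gamma_add_one h4]
  field_simp

lemma diagProfile_pos (hα : 0 < α) (hs : s ≤ b + 1) : 0 < diagProfile α b s := by
  have hsb : (s : ℝ) ≤ b + 1 := by exact_mod_cast hs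
  have : 0 < Gamma (α + b + 1 - s) := Gamma_pos_of_pos (by linarith)
  have : 0 < Gamma (b + 2 - s) := Gamma_pos_of_pos (by linarith)
  unfold diagProfile
  positivity

lemma diagProfile_le_succ (hα : 1 ≤ α) (h : 2 * s ≤ b) :
    diagProfile α b s ≤ diagProfile α b (s + 1) := by
  have hsb : 2 * (s : ℝ) ≤ b := by exact_mod_cast h
  have hF := diagProfile_pos (b := b) (s := s) (by linarith) (by omega)
  refine le_of_mul_le_mul_right ?_ (by nlinarith : 0 < (α + b - s) * (s + 1))
  rw [diagProfile_succ_mul (by linarith) (by omega)]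
  exact mul_le_mul_of_nonneg_left (by nlinarith) hF.le

lemma diagProfile_succ_le (hα : 1 ≤ α) (hsb : s ≤ b) (h : b ≤ 2 * s) :
    diagProfile α b (s + 1) ≤ diagProfile α b s := by
  have hbs : (b : ℝ) ≤ 2 * s := by exact_mod_cast h
  have hsb' : (s : ℝ) ≤ b := by exact_mod_cast hsb
  have hF := diagProfile_pos (b := b) (s := s) (by linarith) (by omega)
  refine le_of_mul_le_mul_right ?_ (by nlinarith : 0 < (α + b - s) * (s + 1))
  rw [diagProfile_succ_mul (by linarith) hsb]
  exact mul_le_mul_of_nonneg_left (by nlinarith) hF.le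

lemma diagProfile_middle {k : ℕ} (hk : b = 2 * k + 1) :
    diagProfile α b (k + 1) = Gamma ((b + 1) / 2 + α) ^ 2 / Gamma ((b + 3) / 2) ^ 2 := by
  subst hk
  simp only [diagProfile]
  push_cast
  rw [show (2 * k + 1 + 1) / 2 + α = (k : ℝ) + 1 + α by ring,
    show α + (2 * k + 1) + 1 - (k + 1) = (k : ℝ) + 1 + α by ring,
    show (2 * (k : ℝ) + 1 + 3) / 2 = k + 1 + 1 by ring,
    show 2 * (k : ℝ) + 1 + 2 - (k + 1) = k + 1 + 1 by ring]
  ring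

theorem statement5_general (α : ℝ) (b : ℕ) (hα1 : 1 < α)
    (hbo : Odd b) :
    IsGreatest {x : ℝ | ∃ s : ℕ, 1 ≤ s ∧ s ≤ b + 1 ∧ x = G α b ((s : ℝ) + α - 1) s}
      (1 / Real.Gamma α * (Real.Gamma ((b : ℝ) + 3) *
          Real.Gamma (((b : ℝ) + 1) / 2 + α) ^ 2) /
        (Real.Gamma ((b : ℝ) + α + 2) * Real.Gamma (((b : ℝ) + 3) / 2) ^ 2)) := by
  obtain ⟨k, hk⟩ := hbo
  have hα0 : 0 < α := by linarith
  have hpeak : 1 / Gamma α * (Gamma ((b : ℝ) + 3) * Gamma (((b : ℝ) + 1) / 2 + α) ^ 2) /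
      (Gamma ((b : ℝ) + α + 2) * Gamma (((b : ℝ) + 3) / 2) ^ 2) =
      Gamma (b + 3) / (Gamma α * Gamma (b + α + 2)) * diagProfile α b (k + 1) := by
    rw [diagProfile_middle hk]
    ring
  refine ⟨⟨k + 1, by omega, by omega, by rw [hpeak, G_diag_eq hα0 (by omega)]⟩, ?_⟩
  rintro _ ⟨s, -, hs, rfl⟩
  rw [hpeak, G_diag_eq hα0 hs]
  gcongr
  exact le_apply_peak_of_unimodal (f := diagProfile α b) (m := k + 1)
    (fun s hs => diagProfile_le_succ hα1.le (by omega))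
    (fun s hs hs' => diagProfile_succ_le hα1.le (by omega) (by omega)) hs

/-- If `b` is odd, the maximum of `G(s+α-1,s)` over integer `s ∈ {1,…,b+1}` equals
`(1/Γ(α))·Γ(b+3)·Γ((b+1)/2+α)² / (Γ(b+α+2)·Γ((b+3)/2)²)`. -/
theorem statement5 (α : ℝ) (b : ℕ) (hα1 : 1 < α) (hα2 : α ≤ 2) (hb : 2 ≤ b)
    (hbo : Odd b) :
    IsGreatest {x : ℝ | ∃ s : ℕ, 1 ≤ s ∧ s ≤ b + 1 ∧ x = G α b ((s : ℝ) + α - 1) s}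
      (1 / Real.Gamma α * (Real.Gamma ((b : ℝ) + 3) *
          Real.Gamma (((b : ℝ) + 1) / 2 + α) ^ 2) /
        (Real.Gamma ((b : ℝ) + α + 2) * Real.Gamma (((b : ℝ) + 3) / 2) ^ 2)) :=
  statement5_general α b hα1 hbo
end

section
/- Let q : {α−1+s : s = 0,…,b+1} → ℝ and let f : [0,∞) → [0,∞) be nondecreasing. Suppose y : T_b → ℝ is nonnegative, not identically zero, and satisfies the discrete fractional boundary value problem Δ^{α}y(t) + q(t+α−1)·f(y(t+α−1)) = 0 for t = 0,…,b+1 with y(α−2) = y(α+b+1) = 0. Set η := max_{s ∈ {0,…,b+1}} y(s+α−1) and M := max_{s ∈ {1,…,b+1}} G(s+α−1,s). Then η ≤ M·f(η)·Σ_{s=0}^{b+1} |q(s+α−1)|. -/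
open PowerSeries

theorem Ring.multichoose_succ_eq {K : Type*} [Field K] [CharZero K] (r : K) (n : ℕ) :
    Ring.multichoose r (n + 1) = Ring.multichoose r n * (r + n) / (n + 1) := by
  have h := Ring.factorial_nsmul_multichoose_eq_ascPochhammer r (n + 1)
  rw [Polynomial.ascPochhammer_smeval_eq_eval, ascPochhammer_succ_eval,
    ← Polynomial.ascPochhammer_smeval_eq_eval,
    ← Ring.factorial_nsmul_multichoose_eq_ascPochhammer, nsmul_eq_mul, nsmul_eq_mul,
    Nat.factorial_succ, Nat.cast_mul] at h
  have hn : (n.factorial : K) ≠ 0 := Nat.cast_ne_zero.mpr n.factorial_ne_zero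
  rw [eq_div_iff (Nat.cast_add_one_ne_zero n)]
  apply mul_left_cancel₀ hn
  push_cast at h
  linear_combination h

namespace Ring

variable {K : Type*} [Field K] [LinearOrder K] [IsStrictOrderedRing K] {r : K}

theorem multichoose_nonneg (hr : 0 ≤ r) (n : ℕ) : 0 ≤ multichoose r n := by
  induction n with
  | zero => simp
  | succ n ih => rw [multichoose_succ_eq]; positivity

theorem multichoose_pos (hr : 0 < r) (n : ℕ) : 0 < multichoose r n := by
  induction n with
  | zero => simp
  | succ n ih => rw [multichoose_succ_eq]; positivity

theorem multichoose_antitone (hr0 : 0 ≤ r) (hr1 : r ≤ 1) : Antitone (multichoose r) := by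
  refine antitone_nat_of_succ_le fun n => ?_
  rw [multichoose_succ_eq, div_le_iff₀ (Nat.cast_add_one_pos n)]
  exact mul_le_mul_of_nonneg_left (by linarith) (multichoose_nonneg hr0 n)

end Ring

theorem Real.multichoose_eq_Gamma_div {r : ℝ} (hr : 0 < r) (n : ℕ) :
    Ring.multichoose r n = Real.Gamma (r + n) / (Real.Gamma r * n.factorial) := by
  have hΓ := (Real.Gamma_pos_of_pos hr).ne'
  induction n with
  | zero => simp [hΓ]
  | succ n ih =>
    have hrn : r + n ≠ 0 := by positivity
    rw [Ring.multichoose_succ_eq, ih, Nat.cast_succ, ← add_assoc, Real.Gamma_add_one hrn,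
      Nat.factorial_succ, Nat.cast_mul]
    field_simp
    push_cast
    ring

namespace PowerSeries

variable {R : Type*} [CommRing R] [BinomialRing R]

/-- The power series `(1 - X) ^ (-r)`. -/
noncomputable def multichooseSeries (r : R) : R⟦X⟧ := mk (Ring.multichoose r)

theorem multichooseSeries_eq_rescale (r : R) :
    multichooseSeries r = rescale (-1) (binomialSeries R (-r)) := by
  ext n
  rw [multichooseSeries, coeff_mk, coeff_rescale, binomialSeries_coeff, Ring.choose_neg',
    Units.smul_def, Int.negOnePow_def]
  simp [← mul_assoc, ← mul_pow]

theorem multichooseSeries_add (r s : R) :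
    multichooseSeries (r + s) = multichooseSeries r * multichooseSeries s := by
  simp only [multichooseSeries_eq_rescale, neg_add, binomialSeries_add, map_mul]

theorem multichooseSeries_zero : multichooseSeries (0 : R) = 1 := by
  simp [multichooseSeries_eq_rescale]

theorem multichooseSeries_neg_two : multichooseSeries (-2 : R) = (1 - X) ^ 2 := by
  rw [multichooseSeries_eq_rescale, neg_neg, show (2 : R) = (2 : ℕ) by norm_num,
    binomialSeries_nat]
  simp [sub_eq_add_neg]

omit [BinomialRing R] in
theorem coeff_one_sub_X_sq_mul (f : R⟦X⟧) (n : ℕ) :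
    coeff (n + 2) ((1 - X) ^ 2 * f) = coeff (n + 2) f - 2 * coeff (n + 1) f + coeff n f := by
  rw [show (1 - X) ^ 2 * f = f - X * f - X * f + X * (X * f) by ring]
  simp only [map_add, map_sub, coeff_succ_X_mul]
  ring

end PowerSeries

variable {α : ℝ}

theorem fracSum_eq_coeff (hα : α ≤ 2) (y : ℕ → ℝ) (k : ℕ) :
    fracSum α y k = coeff k (mk y * multichooseSeries (2 - α)) := by
  rcases hα.eq_or_lt with rfl | hα
  · simp [fracSum, multichooseSeries_zero]
  rw [fracSum, if_neg hα.ne, PowerSeries.coeff_mul, Finset.Nat.sum_antidiagonal_eq_sum_range_succ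
    (fun i j => coeff i (mk y) * coeff j (multichooseSeries (2 - α))), Finset.mul_sum]
  refine Finset.sum_congr rfl fun j hj => ?_
  have hjk : j ≤ k := Nat.lt_succ_iff.mp (Finset.mem_range.mp hj)
  rw [coeff_mk, multichooseSeries, coeff_mk, Real.multichoose_eq_Gamma_div (by linarith), fp,
    ← Nat.cast_sub hjk, ← Real.Gamma_nat_eq_factorial]
  ring_nf

theorem fracDiff_eq_coeff (hα : α ≤ 2) (y : ℕ → ℝ) (t : ℕ) :
    fracDiff α y t = coeff (t + 2) (mk y * multichooseSeries (-α)) := by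
  rw [show -α = -2 + (2 - α) by ring, multichooseSeries_add, multichooseSeries_neg_two,
    mul_left_comm, coeff_one_sub_X_sq_mul, fracDiff, fracSum_eq_coeff hα, fracSum_eq_coeff hα,
    fracSum_eq_coeff hα]

/-- `fallPow α k = (α - 2 + k)^[α - 1] / Γ α` (see `fp_eq_Gamma_mul_fallPow`): the encoded
homogeneous solution `t^[α-1]`, normalised to be the coefficient sequence of `X (1 - X)^(-α)`. -/
noncomputable def fallPow (α : ℝ) : ℕ → ℝ
  | 0 => 0
  | k + 1 => Ring.multichoose α k

@[simp] theorem fallPow_zero (α : ℝ) : fallPow α 0 = 0 := rfl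

theorem coeff_X_mul_multichooseSeries (α : ℝ) (k : ℕ) :
    coeff k (X * multichooseSeries α) = fallPow α k := by
  cases k <;> simp [fallPow, multichooseSeries, coeff_succ_X_mul]

theorem fallPow_succ_pos (hα : 0 < α) (k : ℕ) : 0 < fallPow α (k + 1) :=
  Ring.multichoose_pos hα k

theorem fallPow_succ_sub (α : ℝ) (k : ℕ) :
    fallPow α (k + 1) - fallPow α k = Ring.multichoose (α - 1) k := by
  cases k with
  | zero => simp [fallPow]
  | succ k =>
    have h := Ring.multichoose_succ_succ (α - 1) k
    rw [sub_add_cancel] at h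
    simp only [fallPow, h, add_sub_cancel_right]

theorem fp_eq_Gamma_mul_fallPow (hα : 0 < α) (k : ℕ) :
    fp (α - 2 + k) (α - 1) = Real.Gamma α * fallPow α k := by
  cases k with
  | zero =>
    rw [fp, Nat.cast_zero, add_zero, show α - 2 - (α - 1) + 1 = 0 by ring, Real.Gamma_zero,
      div_zero, fallPow, mul_zero]
  | succ k =>
    have hΓ := (Real.Gamma_pos_of_pos hα).ne'
    rw [fp, fallPow, Real.multichoose_eq_Gamma_div hα,
      show α - 2 + ((k + 1 : ℕ) : ℝ) - (α - 1) + 1 = k + 1 by push_cast; ring,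
      Real.Gamma_nat_eq_factorial, show α - 2 + ((k + 1 : ℕ) : ℝ) + 1 = α + k by push_cast; ring]
    field_simp

theorem eq_fallPow_add_sum_fracDiff (hα : α ≤ 2) {y : ℕ → ℝ} (hy : y 0 = 0) (k : ℕ) :
    y (k + 1) = y 1 * fallPow α (k + 1) +
      ∑ t ∈ Finset.range k, fracDiff α y t * fallPow α (k - t) := by
  have hdiff : mk y * multichooseSeries (-α) = C (y 1) * X + X ^ 2 * mk (fracDiff α y) := by
    ext (_ | _ | t)
    · simp [PowerSeries.coeff_mul, hy]
    · simp [PowerSeries.coeff_mul, Finset.Nat.antidiagonal_succ, multichooseSeries, hy]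
    · simp [coeff_X_pow_mul', fracDiff_eq_coeff hα]
  have hsol : mk y = C (y 1) * (X * multichooseSeries α) +
      X * (mk (fracDiff α y) * (X * multichooseSeries α)) := by
    calc mk y = mk y * multichooseSeries (-α) * multichooseSeries α := by
          rw [mul_assoc, ← multichooseSeries_add, neg_add_cancel, multichooseSeries_zero, mul_one]
      _ = _ := by rw [hdiff]; ring
  have := congrArg (coeff (k + 1)) hsol
  rw [coeff_mk, map_add, coeff_C_mul, coeff_X_mul_multichooseSeries, coeff_succ_X_mul,
    PowerSeries.coeff_mul, Finset.Nat.sum_antidiagonal_eq_sum_range_succ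
      (fun i j => coeff i (mk (fracDiff α y)) * coeff j (X * multichooseSeries α)),
    Finset.sum_range_succ, Nat.sub_self] at this
  simpa only [coeff_mk, coeff_X_mul_multichooseSeries, fallPow_zero, mul_zero, add_zero] using this

section fallPow

variable (hα1 : 1 ≤ α)
include hα1

theorem fallPow_monotone : Monotone (fallPow α) :=
  monotone_nat_of_le_succ fun k => sub_nonneg.mp <| by
    rw [fallPow_succ_sub]; exact Ring.multichoose_nonneg (by linarith) k

theorem fallPow_nonneg (k : ℕ) : 0 ≤ fallPow α k := fallPow_monotone hα1 k.zero_le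

theorem one_le_fallPow {k : ℕ} (hk : 1 ≤ k) : 1 ≤ fallPow α k := by
  simpa [fallPow] using fallPow_monotone hα1 hk

theorem fallPow_succ_sub_antitone (hα2 : α ≤ 2) :
    Antitone fun k => fallPow α (k + 1) - fallPow α k := by
  simp only [fallPow_succ_sub]
  exact Ring.multichoose_antitone (by linarith) (by linarith)

end fallPow

/-- The Green function `G α b t s` at `t = α - 2 + k`, written with `fallPow`. -/
noncomputable def green (α : ℝ) (b s k : ℕ) : ℝ :=
  fallPow α k * fallPow α (b + 2 - s) / fallPow α (b + 3) - fallPow α (k - (s + 1))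

theorem eq_sum_green (hα0 : 0 < α) (hα2 : α ≤ 2) {b : ℕ} {y h : ℕ → ℝ} (hy0 : y 0 = 0)
    (hyb : y (b + 3) = 0) (hbvp : ∀ t ≤ b + 1, fracDiff α y t + h t = 0) {k : ℕ}
    (hk : k ≤ b + 2) :
    y (k + 1) = ∑ t ∈ Finset.range (b + 2), h t * green α b t (k + 1) := by
  have hsol : ∀ k ≤ b + 2, y (k + 1) =
      y 1 * fallPow α (k + 1) - ∑ t ∈ Finset.range (b + 2), h t * fallPow α (k - t) := by
    intro k hk
    rw [eq_fallPow_add_sum_fracDiff hα2 hy0, sub_eq_add_neg, ← Finset.sum_neg_distrib,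
      Finset.sum_subset (Finset.range_subset_range.mpr hk)]
    · refine congrArg _ (Finset.sum_congr rfl fun t ht => ?_)
      rw [eq_neg_of_add_eq_zero_left (hbvp t (by simp at ht; omega))]
      ring
    · intro t _ ht
      simp [Nat.sub_eq_zero_of_le (not_lt.mp (Finset.mem_range.not.mp ht))]
  have hpos : fallPow α (b + 3) ≠ 0 := (fallPow_succ_pos hα0 _).ne'
  have hy1 :
      y 1 = (∑ t ∈ Finset.range (b + 2), h t * fallPow α (b + 2 - t)) / fallPow α (b + 3) := by
    rw [eq_div_iff hpos]
    linarith [hsol (b + 2) le_rfl]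
  rw [hsol k hk, hy1, Finset.sum_div, Finset.sum_mul, ← Finset.sum_sub_distrib]
  refine Finset.sum_congr rfl fun t _ => ?_
  rw [green, Nat.add_sub_add_right]
  ring

theorem green_eq_of_le {b s k : ℕ} (hk : k ≤ s + 1) :
    green α b s k = fallPow α k * fallPow α (b + 2 - s) / fallPow α (b + 3) := by
  rw [green, Nat.sub_eq_zero_of_le hk, fallPow_zero, sub_zero]

theorem green_eq_zero_right (hα : 0 < α) {b s : ℕ} (hs : s ≤ b + 1) :
    green α b s (b + 3) = 0 := by
  rw [green, show b + 3 - (s + 1) = b + 2 - s by omega,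
    mul_div_cancel_left₀ _ (fallPow_succ_pos hα (b + 2)).ne', sub_self]

section green

variable (hα1 : 1 ≤ α) (hα2 : α ≤ 2) {b : ℕ}
include hα1 hα2

theorem green_succ_le {s k : ℕ} (hk : s + 1 ≤ k) : green α b s (k + 1) ≤ green α b s k := by
  obtain ⟨m, rfl⟩ : ∃ m, k = m + (s + 1) := ⟨k - (s + 1), by omega⟩
  have hΔ := fallPow_succ_sub_antitone hα1 hα2 (show m ≤ m + (s + 1) by omega)
  have hΔ0 : 0 ≤ fallPow α (m + (s + 1) + 1) - fallPow α (m + (s + 1)) :=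
    sub_nonneg.2 (fallPow_monotone hα1 (by omega))
  have hA1 : fallPow α (b + 2 - s) / fallPow α (b + 3) ≤ 1 :=
    div_le_one_of_le₀ (fallPow_monotone hα1 (by omega)) (fallPow_nonneg hα1 _)
  simp only [green, show m + (s + 1) + 1 - (s + 1) = m + 1 by omega, Nat.add_sub_cancel,
    mul_div_assoc] at hΔ ⊢
  nlinarith [mul_le_mul_of_nonneg_left hA1 hΔ0]

theorem green_antitoneOn (s : ℕ) : AntitoneOn (green α b s) (Set.Ici (s + 1)) :=
  antitoneOn_nat_Ici_of_succ_le fun _ hk => green_succ_le hα1 hα2 hk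

theorem green_nonneg {s k : ℕ} (hs : s ≤ b + 1) (hk : k ≤ b + 3) : 0 ≤ green α b s k := by
  rcases le_total k (s + 1) with hks | hks
  · rw [green_eq_of_le hks]
    exact div_nonneg (mul_nonneg (fallPow_nonneg hα1 _) (fallPow_nonneg hα1 _))
      (fallPow_nonneg hα1 _)
  · calc 0 = green α b s (b + 3) := (green_eq_zero_right (by linarith) hs).symm
      _ ≤ green α b s k := green_antitoneOn hα1 hα2 s hks (by simp; omega) hk

theorem green_le_diag (s k : ℕ) : green α b s k ≤ green α b s (s + 1) := by
  rcases le_total k (s + 1) with hks | hks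
  · rw [green_eq_of_le hks, green_eq_of_le le_rfl]
    exact div_le_div_of_nonneg_right (mul_le_mul_of_nonneg_right (fallPow_monotone hα1 hks)
      (fallPow_nonneg hα1 _)) (fallPow_nonneg hα1 _)
  · exact green_antitoneOn hα1 hα2 s (Set.mem_Ici.mpr le_rfl) hks hks

theorem green_zero_le_green_one_two (k : ℕ) : green α b 0 k ≤ green α b 1 2 := by
  have hstep := fallPow_succ_sub α (b + 1)
  have hΔ := Ring.multichoose_antitone (r := α - 1) (by linarith) (by linarith)
    (show 1 ≤ b + 1 by omega)
  rw [Ring.multichoose_one_right] at hΔ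
  have h1 := one_le_fallPow hα1 (show 1 ≤ b + 1 by omega)
  have key : fallPow α (b + 2) ≤ α * fallPow α (b + 1) := by nlinarith
  refine (green_le_diag hα1 hα2 0 k).trans ?_
  rw [green_eq_of_le le_rfl, green_eq_of_le le_rfl, Nat.sub_zero,
    show b + 2 - 1 = b + 1 by omega]
  simpa [fallPow, Ring.multichoose_one_right] using
    div_le_div_of_nonneg_right key (fallPow_nonneg hα1 (b + 3))

end green

theorem G_diag_eq_green (hα : 0 < α) {b s : ℕ} (hs : s ≤ b + 1) :
    G α b ((s : ℝ) + α - 1) s = green α b s (s + 1) := by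
  have hΓ := (Real.Gamma_pos_of_pos hα).ne'
  rw [G, if_pos (by linarith),
    show (s : ℝ) + α - 1 - s - 1 = α - 2 + ((0 : ℕ) : ℝ) by push_cast; ring,
    show (s : ℝ) + α - 1 = α - 2 + ((s + 1 : ℕ) : ℝ) by push_cast; ring,
    show α + (b : ℝ) - s = α - 2 + ((b + 2 - s : ℕ) : ℝ) by
      rw [Nat.cast_sub (by omega)]; push_cast; ring,
    show α + (b : ℝ) + 1 = α - 2 + ((b + 3 : ℕ) : ℝ) by push_cast; ring]
  simp only [fp_eq_Gamma_mul_fallPow hα, green, Nat.sub_self, fallPow_zero]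
  field_simp

theorem green_le_sup' (hα1 : 1 ≤ α) (hα2 : α ≤ 2) {b s : ℕ} (hs : s ≤ b + 1) (k : ℕ) :
    green α b s k ≤ (Finset.Icc 1 (b + 1)).sup' (Finset.nonempty_Icc.mpr (by omega))
      (fun s => G α b ((s : ℝ) + α - 1) s) := by
  have hdiag : ∀ s ∈ Finset.Icc 1 (b + 1), green α b s (s + 1) ≤
      (Finset.Icc 1 (b + 1)).sup' (Finset.nonempty_Icc.mpr (by omega))
        (fun s => G α b ((s : ℝ) + α - 1) s) := fun s hs => by
    rw [← G_diag_eq_green (by linarith) (Finset.mem_Icc.mp hs).2]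
    exact Finset.le_sup' (fun s : ℕ => G α b ((s : ℝ) + α - 1) s) hs
  rcases Nat.eq_zero_or_pos s with rfl | hs0
  · exact (green_zero_le_green_one_two hα1 hα2 k).trans (hdiag 1 (by simp))
  · exact (green_le_diag hα1 hα2 s k).trans (hdiag s (Finset.mem_Icc.mpr ⟨hs0, hs⟩))

theorem mul_mul_le_abs_mul_mul {q a c g M : ℝ} (ha : 0 ≤ a) (hac : a ≤ c) (hg : 0 ≤ g)
    (hgM : g ≤ M) : q * a * g ≤ |q| * c * M :=
  calc q * a * g ≤ |q| * a * g := by gcongr; exact le_abs_self q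
    _ ≤ |q| * c * M := by have := ha.trans hac; gcongr

/-- If the discrete fractional BVP has a nontrivial (nonnegative) solution `y`,
then `η ≤ M·f(η)·Σ_{s=0}^{b+1} |q(s+α-1)|`, where
`η = max_{s ∈ {0,…,b+1}} y(s+α-1)` and `M = max_{s ∈ {1,…,b+1}} G(s+α-1,s)`.
Here `y k` stands for `y(α-2+k)` and `q s` stands for `q(α-1+s)`. -/
theorem statement11 (α : ℝ) (b : ℕ) (hα1 : 1 < α) (hα2 : α ≤ 2)
    (q : ℕ → ℝ) (f : ℝ → ℝ)
    (hf0 : ∀ x : ℝ, 0 ≤ x → 0 ≤ f x) (hfmono : MonotoneOn f (Set.Ici (0 : ℝ)))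
    (y : ℕ → ℝ) (hy0 : ∀ k : ℕ, k ≤ b + 3 → 0 ≤ y k)
    (hbvp : ∀ t : ℕ, t ≤ b + 1 → fracDiff α y t + q t * f (y (t + 1)) = 0)
    (hbc0 : y 0 = 0) (hbc1 : y (b + 3) = 0) :
    (Finset.range (b + 2)).sup' (Finset.nonempty_range_iff.mpr (by omega))
        (fun s => y (s + 1)) ≤
      ((Finset.Icc 1 (b + 1)).sup' (Finset.nonempty_Icc.mpr (by omega))
          (fun s => G α b ((s : ℝ) + α - 1) s)) *
        f ((Finset.range (b + 2)).sup' (Finset.nonempty_range_iff.mpr (by omega))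
          (fun s => y (s + 1))) *
        ∑ s ∈ Finset.range (b + 2), |q s| := by
  set η := (Finset.range (b + 2)).sup' _ fun s => y (s + 1)
  set M := (Finset.Icc 1 (b + 1)).sup' _ fun s => G α b ((s : ℝ) + α - 1) s
  obtain ⟨k, hk, hηk⟩ :=
    Finset.exists_mem_eq_sup' Finset.nonempty_range_add_one fun s => y (s + 1)
  have hk : k ≤ b + 1 := Nat.lt_succ_iff.mp (Finset.mem_range.mp hk)
  calc η = y (k + 1) := hηk
    _ = ∑ t ∈ Finset.range (b + 2), q t * f (y (t + 1)) * green α b t (k + 1) :=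
      eq_sum_green (by linarith) hα2 hbc0 hbc1 hbvp (by omega)
    _ ≤ ∑ t ∈ Finset.range (b + 2), |q t| * f η * M := by
      refine Finset.sum_le_sum fun t ht => ?_
      have hyη : y (t + 1) ≤ η := Finset.le_sup' (fun s => y (s + 1)) ht
      have ht : t ≤ b + 1 := Nat.lt_succ_iff.mp (Finset.mem_range.mp ht)
      have hyt : 0 ≤ y (t + 1) := hy0 _ (by omega)
      exact mul_mul_le_abs_mul_mul (hf0 _ hyt) (hfmono hyt (hyt.trans hyη) hyη)
        (green_nonneg hα1.le hα2 ht (by omega)) (green_le_sup' hα1.le hα2 ht _)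
    _ = M * f η * ∑ t ∈ Finset.range (b + 2), |q t| := by
      rw [← Finset.sum_mul, ← Finset.sum_mul]
      ring
end
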